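/- For every θ ∈ ℂ⁴, the cubic surface S(θ) has at most four singular points; that is, the set {x ∈ ℂ³ : f(x,θ) = 0 and ∂f/∂x₁(x,θ) = ∂f/∂x₂(x,θ) = ∂f/∂x₃(x,θ) = 0} is finite with at most 4 elements. -/

import Mathlib

noncomputable section

/-- The defining cubic polynomial `f(x,θ)` of the character variety. -/
def pvF (θ : ℂ × ℂ × ℂ × ℂ) (x : ℂ × ℂ × ℂ) : ℂ :=
  x.1 * x.2.1 * x.2.2 + x.1 ^ 2 + x.2.1 ^ 2 + x.2.2 ^ 2
    - θ.1 * x.1 - θ.2.1 * x.2.1 - θ.2.2.1 * x.2.2 + θ.2.2.2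

/-- The set of singular points of the cubic surface `S(θ)`: points of `S(θ)` at
which all three partial derivatives of `f(·,θ)` vanish. -/
def singSet (θ : ℂ × ℂ × ℂ × ℂ) : Set (ℂ × ℂ × ℂ) :=
  {x | pvF θ x = 0 ∧
       x.2.1 * x.2.2 + 2 * x.1 - θ.1 = 0 ∧
       x.1 * x.2.2 + 2 * x.2.1 - θ.2.1 = 0 ∧
       x.1 * x.2.1 + 2 * x.2.2 - θ.2.2.1 = 0}

/-!
Two distinct singular points `p, q` always share a coordinate: `f` restricted to the line
through them is a cubic with double roots at both ends, hence identically zero, and its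
leading coefficient is `(q₁ - p₁)(q₂ - p₂)(q₃ - p₃)`. On the other hand, the critical points
with a prescribed coordinate `x₃ = c` solve two linear equations in `(x₁, x₂)` of determinant
`4 - c²` together with `x₁ x₂ = θ₃ - 2c`; this leaves at most two of them. So each singular
point `p` has at most one companion per coordinate, and there are at most `1 + 3` in all.
-/

lemma Set.finite_and_ncard_le_four_of_subset_insert_union {α : Type*} {s t₁ t₂ t₃ : Set α}
    (p : α) (h₁ : t₁.Subsingleton) (h₂ : t₂.Subsingleton) (h₃ : t₃.Subsingleton)
    (hs : s ⊆ insert p (t₁ ∪ t₂ ∪ t₃)) : s.Finite ∧ s.ncard ≤ 4 := by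
  have hfin := ((h₁.finite.union h₂.finite).union h₃.finite).insert p
  have card_le_one {t : Set α} (ht : t.Subsingleton) : t.ncard ≤ 1 :=
    (Set.ncard_le_one ht.finite).2 fun _ ha _ hb ↦ ht ha hb
  refine ⟨hfin.subset hs, ?_⟩
  calc s.ncard
      ≤ (t₁ ∪ t₂ ∪ t₃).ncard + 1 := (Set.ncard_le_ncard hs hfin).trans (Set.ncard_insert_le _ _)
    _ ≤ t₁.ncard + t₂.ncard + t₃.ncard + 1 := by
        gcongr
        exact (Set.ncard_union_le _ _).trans (by gcongr; exact Set.ncard_union_le _ _)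
    _ ≤ 4 := by
        have := card_le_one h₁; have := card_le_one h₂; have := card_le_one h₃
        omega

namespace CubicSurface

def IsCritical (θ : ℂ × ℂ × ℂ × ℂ) (x : ℂ × ℂ × ℂ) : Prop :=
  x.2.1 * x.2.2 + 2 * x.1 - θ.1 = 0 ∧
  x.1 * x.2.2 + 2 * x.2.1 - θ.2.1 = 0 ∧
  x.1 * x.2.1 + 2 * x.2.2 - θ.2.2.1 = 0

def cycle (x : ℂ × ℂ × ℂ) : ℂ × ℂ × ℂ := (x.2.1, x.2.2, x.1)

def cycleParam (θ : ℂ × ℂ × ℂ × ℂ) : ℂ × ℂ × ℂ × ℂ := (θ.2.1, θ.2.2.1, θ.1, θ.2.2.2)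

lemma cycle_injective : Function.Injective cycle := by
  rintro ⟨a, b, c⟩ ⟨a', b', c'⟩ h
  simp_all [cycle]

variable {θ : ℂ × ℂ × ℂ × ℂ} {p q r x y : ℂ × ℂ × ℂ}

lemma IsCritical.cycle (h : IsCritical θ x) : IsCritical (cycleParam θ) (cycle x) := by
  obtain ⟨h₁, h₂, h₃⟩ := h
  simp only [IsCritical, CubicSurface.cycle, cycleParam]
  exact ⟨by linear_combination h₂, by linear_combination h₃, by linear_combination h₁⟩

lemma IsCritical.eq_of_third_eq_of_second_eq (hx : IsCritical θ x) (hy : IsCritical θ y)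
    (h₃ : x.2.2 = y.2.2) (h₂ : x.2.1 = y.2.1) : x = y := by
  have h₁ : x.1 = y.1 := by
    linear_combination (hx.1 - hy.1) / 2 - x.2.2 / 2 * h₂ - y.2.1 / 2 * h₃
  exact Prod.ext h₁ (Prod.ext h₂ h₃)

lemma IsCritical.third_sq_eq_four (hx : IsCritical θ x) (hy : IsCritical θ y)
    (h₃ : x.2.2 = y.2.2) (h₂ : x.2.1 ≠ y.2.1) : x.2.2 ^ 2 = 4 := by
  obtain ⟨a, b, c⟩ := x
  obtain ⟨a', b', c'⟩ := y
  obtain rfl : c = c' := h₃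
  refine mul_left_cancel₀ (sub_ne_zero.2 h₂) ?_
  linear_combination c * (hx.1 - hy.1) - 2 * (hx.2.1 - hy.2.1)

lemma IsCritical.third_mul_add_second (hx : IsCritical θ x) (hy : IsCritical θ y)
    (h₃ : x.2.2 = y.2.2) (h₂ : x.2.1 ≠ y.2.1) : x.2.2 * (x.2.1 + y.2.1) = θ.1 := by
  obtain ⟨a, b, c⟩ := x
  obtain ⟨a', b', c'⟩ := y
  obtain rfl : c = c' := h₃
  refine mul_left_cancel₀ (sub_ne_zero.2 h₂) ?_
  linear_combination b * hx.1 - b' * hy.1 - 2 * (hx.2.2 - hy.2.2)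

lemma IsCritical.subsingleton_third (hp : IsCritical θ p) :
    {q | IsCritical θ q ∧ q.2.2 = p.2.2 ∧ q ≠ p}.Subsingleton := by
  rintro q ⟨hq, hq₃, hqp⟩ r ⟨hr, hr₃, hrp⟩
  have hq₂ : q.2.1 ≠ p.2.1 := fun h ↦ hqp (hq.eq_of_third_eq_of_second_eq hp hq₃ h)
  have hr₂ : r.2.1 ≠ p.2.1 := fun h ↦ hrp (hr.eq_of_third_eq_of_second_eq hp hr₃ h)
  have hc : q.2.2 ≠ 0 := by
    intro h
    simpa [h] using hq.third_sq_eq_four hp hq₃ hq₂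
  refine hq.eq_of_third_eq_of_second_eq hr (hq₃.trans hr₃.symm) (mul_left_cancel₀ hc ?_)
  linear_combination hq.third_mul_add_second hp hq₃ hq₂ - hr.third_mul_add_second hp hr₃ hr₂
    + (r.2.1 + p.2.1) * (hr₃ - hq₃)

lemma IsCritical.subsingleton_first (hp : IsCritical θ p) :
    {q | IsCritical θ q ∧ q.1 = p.1 ∧ q ≠ p}.Subsingleton :=
  (hp.cycle.subsingleton_third.preimage cycle_injective).anti
    fun _ ⟨hq, hq₁, hqp⟩ ↦ ⟨hq.cycle, hq₁, cycle_injective.ne hqp⟩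

lemma IsCritical.subsingleton_second (hp : IsCritical θ p) :
    {q | IsCritical θ q ∧ q.2.1 = p.2.1 ∧ q ≠ p}.Subsingleton :=
  (hp.cycle.subsingleton_first.preimage cycle_injective).anti
    fun _ ⟨hq, hq₂, hqp⟩ ↦ ⟨hq.cycle, hq₂, cycle_injective.ne hqp⟩

lemma coord_eq_of_mem_singSet (hp : p ∈ singSet θ) (hq : q ∈ singSet θ) :
    q.1 = p.1 ∨ q.2.1 = p.2.1 ∨ q.2.2 = p.2.2 := by
  obtain ⟨hp₀, hp₁, hp₂, hp₃⟩ := hp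
  obtain ⟨hq₀, hq₁, hq₂, hq₃⟩ := hq
  unfold pvF at hp₀ hq₀
  have h : (q.1 - p.1) * (q.2.1 - p.2.1) * (q.2.2 - p.2.2) = 0 := by
    linear_combination (q.1 - p.1) * (hq₁ + hp₁) + (q.2.1 - p.2.1) * (hq₂ + hp₂)
      + (q.2.2 - p.2.2) * (hq₃ + hp₃) - 2 * hq₀ + 2 * hp₀
  simpa only [mul_eq_zero, sub_eq_zero, or_assoc] using h

end CubicSurface

/-- For every `θ`, the cubic surface `S(θ)` has at most four singular points. -/
theorem singSet_finite_card_le_four (θ : ℂ × ℂ × ℂ × ℂ) :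
    (singSet θ).Finite ∧ (singSet θ).ncard ≤ 4 := by
  obtain h | ⟨p, hp⟩ := (singSet θ).eq_empty_or_nonempty
  · simp [h]
  have hpc : CubicSurface.IsCritical θ p := hp.2
  refine Set.finite_and_ncard_le_four_of_subset_insert_union p hpc.subsingleton_first
    hpc.subsingleton_second hpc.subsingleton_third fun q hq ↦ ?_
  by_cases hqp : q = p
  · exact .inl hqp
  rcases CubicSurface.coord_eq_of_mem_singSet hp hq with h | h | h
  · exact .inr (.inl (.inl ⟨hq.2, h, hqp⟩))
  · exact .inr (.inl (.inr ⟨hq.2, h, hqp⟩))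
  · exact .inr (.inr ⟨hq.2, h, hqp⟩)
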